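/- arXiv:1203.2969 — 2 statements merged into one kernel-verified Lean document; each statement's English description precedes it below -/
import Mathlib

section
/- If u is a subsolution, then the chain of inequalities T⁺u ≤ T⁺(T⁻u) ≤ u ≤ T⁻(T⁺u) ≤ T⁻u holds pointwise. -/
/-!
For a subsolution `u` the functions `y ↦ u y + c (y, x)` and `y ↦ u y - c (x, y)` are bounded
below, resp. above, by `u x`, so `T⁻` and `T⁺` are honest infima and suprema. This gives
`T⁺u ≤ u ≤ T⁻u` and the one-sided bounds `T⁻u y ≤ u x + c (x, y)` and `u x - c (y, x) ≤ T⁺u y`;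
the chain follows from these and the monotonicity of `T⁻` and `T⁺`.
-/

noncomputable def Tm {M : Type*} (c : M × M → ℝ) (w : M → ℝ) : M → ℝ :=
  fun x => ⨅ y, (w y + c (y, x))

noncomputable def Tp {M : Type*} (c : M × M → ℝ) (w : M → ℝ) : M → ℝ :=
  fun x => ⨆ y, (w y - c (x, y))

open Set

section LaxOleinik

variable {M : Type*} {c : M × M → ℝ}

theorem tm_mono [Nonempty M] {v w : M → ℝ} (hvw : v ≤ w)
    (hv : ∀ x, BddBelow (range fun y => v y + c (y, x))) : Tm c v ≤ Tm c w := fun x =>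
  le_ciInf fun y => (ciInf_le (hv x) y).trans (by gcongr; exact hvw y)

theorem tp_mono [Nonempty M] {v w : M → ℝ} (hvw : v ≤ w)
    (hw : ∀ x, BddAbove (range fun y => w y - c (x, y))) : Tp c v ≤ Tp c w := fun x =>
  ciSup_le fun y => (by gcongr; exact hvw y : v y - c (x, y) ≤ _).trans (le_ciSup (hw x) y)

def IsSubsolution (c : M × M → ℝ) (u : M → ℝ) : Prop :=
  ∀ x y, u y - u x ≤ c (x, y)

namespace IsSubsolution

variable {u : M → ℝ}

theorem bddBelow_add (hu : IsSubsolution c u) (x : M) :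
    BddBelow (range fun y => u y + c (y, x)) :=
  ⟨u x, forall_mem_range.2 fun y => by linarith [hu y x]⟩

theorem bddAbove_sub (hu : IsSubsolution c u) (x : M) :
    BddAbove (range fun y => u y - c (x, y)) :=
  ⟨u x, forall_mem_range.2 fun y => by linarith [hu x y]⟩

theorem tm_le (hu : IsSubsolution c u) (x y : M) : Tm c u y ≤ u x + c (x, y) :=
  ciInf_le (hu.bddBelow_add y) x

theorem le_tp (hu : IsSubsolution c u) (x y : M) : u x - c (y, x) ≤ Tp c u y :=
  le_ciSup (hu.bddAbove_sub y) x

theorem le_tm [Nonempty M] (hu : IsSubsolution c u) : u ≤ Tm c u := fun x =>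
  le_ciInf fun y => by linarith [hu y x]

theorem tp_le [Nonempty M] (hu : IsSubsolution c u) : Tp c u ≤ u := fun x =>
  ciSup_le fun y => by linarith [hu x y]

theorem tp_le_tp_tm [Nonempty M] (hu : IsSubsolution c u) : Tp c u ≤ Tp c (Tm c u) :=
  tp_mono hu.le_tm fun x => ⟨u x, forall_mem_range.2 fun z => by linarith [hu.tm_le x z]⟩

theorem tp_tm_le [Nonempty M] (hu : IsSubsolution c u) : Tp c (Tm c u) ≤ u := fun x =>
  ciSup_le fun y => by linarith [hu.tm_le x y]

theorem le_tm_tp [Nonempty M] (hu : IsSubsolution c u) : u ≤ Tm c (Tp c u) := fun x =>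
  le_ciInf fun y => by linarith [hu.le_tp x y]

theorem tm_tp_le_tm [Nonempty M] (hu : IsSubsolution c u) : Tm c (Tp c u) ≤ Tm c u :=
  tm_mono hu.tp_le fun x => ⟨u x, forall_mem_range.2 fun z => by linarith [hu.le_tp x z]⟩

end IsSubsolution

end LaxOleinik

theorem subsolution_chain_general {M : Type*}
    (c : M × M → ℝ) (u : M → ℝ)
    (hsub : ∀ x y, u y - u x ≤ c (x, y)) :
    ∀ x, Tp c u x ≤ Tp c (Tm c u) x ∧ Tp c (Tm c u) x ≤ u x ∧
      u x ≤ Tm c (Tp c u) x ∧ Tm c (Tp c u) x ≤ Tm c u x := by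
  intro x
  have : Nonempty M := ⟨x⟩
  have hu : IsSubsolution c u := hsub
  exact ⟨hu.tp_le_tp_tm x, hu.tp_tm_le x, hu.le_tm_tp x, hu.tm_tp_le_tm x⟩

theorem subsolution_chain {M : Type*} [Nonempty M]
    (c : M × M → ℝ) (u : M → ℝ)
    (hc : ∃ K : ℝ, ∀ p, K ≤ c p) (hu : ∃ C : ℝ, ∀ x, |u x| ≤ C)
    (hsub : ∀ x y, u y - u x ≤ c (x, y)) :
    ∀ x, Tp c u x ≤ Tp c (Tm c u) x ∧ Tp c (Tm c u) x ≤ u x ∧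
      u x ≤ Tm c (Tp c u) x ∧ Tm c (Tp c u) x ≤ Tm c u x :=
  subsolution_chain_general c u hsub
end

section
/- If u and v are subsolutions such that v is free at every point outside A_u := {x : T⁺u(x) = u(x) = T⁻u(x)} and v = u on A_u, then v is strict at every pair (x,y) at which u is strict: u(y)-u(x) < c(x,y) implies v(y)-v(x) < c(x,y). -/
/-! If `x` and `y` both lie in `A_u`, then `v` agrees with `u` at both points. Otherwise `v` is
free at `x` or at `y`, and one half of freeness already makes `v` strict at `(x, y)`:
`v y - c (x, y) ≤ T⁺v x < v x`, or `v y < T⁻v y ≤ v x + c (x, y)`. -/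

section FreePoints

variable {M : Type*} {c : M × M → ℝ} {w : M → ℝ}

theorem sub_le_Tp (hw : BddAbove (Set.range w)) (hc : BddBelow (Set.range c)) (x y : M) :
    w y - c (x, y) ≤ Tp c w x := by
  obtain ⟨C, hC⟩ := hw
  obtain ⟨K, hK⟩ := hc
  refine le_ciSup (f := fun y => w y - c (x, y)) ⟨C - K, ?_⟩ y
  rintro _ ⟨z, rfl⟩
  linarith [hC ⟨z, rfl⟩, hK ⟨(x, z), rfl⟩]

theorem Tm_le_add (hw : BddBelow (Set.range w)) (hc : BddBelow (Set.range c)) (x y : M) :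
    Tm c w y ≤ w x + c (x, y) := by
  obtain ⟨C, hC⟩ := hw
  obtain ⟨K, hK⟩ := hc
  refine ciInf_le (f := fun x => w x + c (x, y)) ⟨C + K, ?_⟩ x
  rintro _ ⟨z, rfl⟩
  linarith [hC ⟨z, rfl⟩, hK ⟨(z, y), rfl⟩]

theorem sub_lt_of_Tp_lt (hw : BddAbove (Set.range w)) (hc : BddBelow (Set.range c)) {x : M}
    (hx : Tp c w x < w x) (y : M) : w y - w x < c (x, y) := by
  linarith [sub_le_Tp hw hc x y]

theorem sub_lt_of_lt_Tm (hw : BddBelow (Set.range w)) (hc : BddBelow (Set.range c)) {y : M}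
    (hy : w y < Tm c w y) (x : M) : w y - w x < c (x, y) := by
  linarith [Tm_le_add hw hc x y]

end FreePoints

theorem strictness_transfer_general {M : Type*}
    (c : M × M → ℝ) (u v : M → ℝ)
    (hc : ∃ K : ℝ, ∀ p, K ≤ c p)
    (hv : ∃ C : ℝ, ∀ x, |v x| ≤ C)
    (hfree : ∀ x, ¬ (Tp c u x = u x ∧ u x = Tm c u x) →
      Tp c v x < v x ∧ v x < Tm c v x)
    (heq : ∀ x, (Tp c u x = u x ∧ u x = Tm c u x) → v x = u x) :
    ∀ x y, u y - u x < c (x, y) → v y - v x < c (x, y) := by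
  obtain ⟨K, hK⟩ := hc
  obtain ⟨C, hC⟩ := hv
  have hc_bdd : BddBelow (Set.range c) := ⟨K, by rintro _ ⟨p, rfl⟩; exact hK p⟩
  have hv_bdd : BddAbove (Set.range v) := ⟨C, by rintro _ ⟨z, rfl⟩; exact (abs_le.mp (hC z)).2⟩
  have hv_bdd' : BddBelow (Set.range v) := ⟨-C, by rintro _ ⟨z, rfl⟩; exact (abs_le.mp (hC z)).1⟩
  intro x y hxy
  by_cases hy : Tp c u y = u y ∧ u y = Tm c u y
  · by_cases hx : Tp c u x = u x ∧ u x = Tm c u x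
    · rwa [heq x hx, heq y hy]
    · exact sub_lt_of_Tp_lt hv_bdd hc_bdd (hfree x hx).1 y
  · exact sub_lt_of_lt_Tm hv_bdd' hc_bdd (hfree y hy).2 x

theorem strictness_transfer {M : Type*} [Nonempty M]
    (c : M × M → ℝ) (u v : M → ℝ)
    (hc : ∃ K : ℝ, ∀ p, K ≤ c p)
    (hu : ∃ C : ℝ, ∀ x, |u x| ≤ C) (hv : ∃ C : ℝ, ∀ x, |v x| ≤ C)
    (husub : ∀ x y, u y - u x ≤ c (x, y)) (hvsub : ∀ x y, v y - v x ≤ c (x, y))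
    (hfree : ∀ x, ¬ (Tp c u x = u x ∧ u x = Tm c u x) →
      Tp c v x < v x ∧ v x < Tm c v x)
    (heq : ∀ x, (Tp c u x = u x ∧ u x = Tm c u x) → v x = u x) :
    ∀ x y, u y - u x < c (x, y) → v y - v x < c (x, y) :=
  strictness_transfer_general c u v hc hv hfree heq
end
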